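/- arXiv:2202.05439 — 3 statements merged into one kernel-verified Lean document; each statement's English description precedes it below -/
import Mathlib

section
/- The minimizer of the Tikhonov functional with noisy data satisfies the stability estimate ‖A ȳ − A u₀‖² + α‖ȳ − u₀‖² ≤ δ² + α‖u₀‖². -/
/-!
A minimiser `ȳ` of the quadratic functional `J(y) = ‖A y - b‖² + α ‖y‖²` is a critical point (the
quadratic `t ↦ J(ȳ + t v) - J(ȳ) ≥ 0` has no constant term, so its linear term vanishes), hence
`J(y) = J(ȳ) + ‖A (y - ȳ)‖² + α ‖y - ȳ‖²` exactly. Taking `y = u₀` and dropping `J(ȳ) ≥ 0` bounds the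
left-hand side by `J(u₀) = ‖b_exact - b‖² + α ‖u₀‖² ≤ δ² + α ‖u₀‖²`.
-/

open RealInnerProductSpace

section Tikhonov

variable {H K : Type*} [NormedAddCommGroup H] [InnerProductSpace ℝ H]
  [NormedAddCommGroup K] [InnerProductSpace ℝ K]

noncomputable def tikhonov (A : H →L[ℝ] K) (b : K) (α : ℝ) (y : H) : ℝ :=
  ‖A y - b‖ ^ 2 + α * ‖y‖ ^ 2

variable (A : H →L[ℝ] K) (b : K) (α : ℝ)

theorem tikhonov_add (y v : H) :
    tikhonov A b α (y + v) = tikhonov A b α y + 2 * (⟪A y - b, A v⟫ + α * ⟪y, v⟫)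
      + (‖A v‖ ^ 2 + α * ‖v‖ ^ 2) := by
  have hAv : A (y + v) - b = (A y - b) + A v := by rw [map_add]; abel
  simp only [tikhonov, hAv, norm_add_sq_real]
  ring

theorem tikhonov_add_smul (y v : H) (t : ℝ) :
    tikhonov A b α (y + t • v) = tikhonov A b α y + 2 * (⟪A y - b, A v⟫ + α * ⟪y, v⟫) * t
      + (‖A v‖ ^ 2 + α * ‖v‖ ^ 2) * (t * t) := by
  rw [tikhonov_add, map_smul, inner_smul_right, inner_smul_right, norm_smul, norm_smul,
    Real.norm_eq_abs, mul_pow, mul_pow, sq_abs]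
  ring

variable {A b α} {ybar : H} (hmin : ∀ y, tikhonov A b α ybar ≤ tikhonov A b α y)
include hmin

theorem inner_tikhonov_gradient_eq_zero (v : H) : ⟪A ybar - b, A v⟫ + α * ⟪ybar, v⟫ = 0 := by
  have hquad : ∀ t : ℝ, 0 ≤ (‖A v‖ ^ 2 + α * ‖v‖ ^ 2) * (t * t)
      + 2 * (⟪A ybar - b, A v⟫ + α * ⟪ybar, v⟫) * t + 0 := fun t => by
    have := hmin (ybar + t • v)
    rw [tikhonov_add_smul] at this
    linarith
  have := discrim_le_zero hquad
  rw [discrim] at this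
  nlinarith [sq_nonneg (⟪A ybar - b, A v⟫ + α * ⟪ybar, v⟫)]

theorem tikhonov_eq_of_isMin (y : H) :
    tikhonov A b α y = tikhonov A b α ybar + (‖A (y - ybar)‖ ^ 2 + α * ‖y - ybar‖ ^ 2) := by
  have := tikhonov_add A b α ybar (y - ybar)
  rwa [add_sub_cancel, inner_tikhonov_gradient_eq_zero hmin, mul_zero, add_zero] at this

end Tikhonov

theorem tikhonov_stability_estimate_general
    {H K : Type*} [NormedAddCommGroup H] [InnerProductSpace ℝ H]
    [NormedAddCommGroup K] [InnerProductSpace ℝ K]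
    (A : H →L[ℝ] K) (b : K) (α : ℝ) (hα : 0 < α)
    (ybar : H)
    (hmin : ∀ y : H, ‖A ybar - b‖ ^ 2 + α * ‖ybar‖ ^ 2 ≤ ‖A y - b‖ ^ 2 + α * ‖y‖ ^ 2)
    (u₀ : H) (b_exact : K) (hexact : A u₀ = b_exact)
    (δ : ℝ) (hnoise : ‖b - b_exact‖ ≤ δ) :
    ‖A ybar - A u₀‖ ^ 2 + α * ‖ybar - u₀‖ ^ 2 ≤ δ ^ 2 + α * ‖u₀‖ ^ 2 := by
  have hsplit := tikhonov_eq_of_isMin hmin u₀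
  have hmin_nonneg : 0 ≤ tikhonov A b α ybar := by unfold tikhonov; positivity
  have hdata : tikhonov A b α u₀ ≤ δ ^ 2 + α * ‖u₀‖ ^ 2 := by
    have : ‖A u₀ - b‖ ^ 2 ≤ δ ^ 2 := by
      rw [hexact, norm_sub_rev]
      exact pow_le_pow_left₀ (norm_nonneg _) hnoise 2
    unfold tikhonov
    linarith
  rw [map_sub, norm_sub_rev (A u₀), norm_sub_rev u₀] at hsplit
  linarith

/-- Stability estimate for the Tikhonov minimizer with noisy data:
`‖A ȳ − A u₀‖² + α‖ȳ − u₀‖² ≤ δ² + α‖u₀‖²`. -/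
theorem tikhonov_stability_estimate
    {H K : Type*} [NormedAddCommGroup H] [InnerProductSpace ℝ H]
    [NormedAddCommGroup K] [InnerProductSpace ℝ K]
    (A : H →L[ℝ] K) (b : K) (α : ℝ) (hα : 0 < α)
    (ybar : H)
    (hmin : ∀ y : H, ‖A ybar - b‖ ^ 2 + α * ‖ybar‖ ^ 2 ≤ ‖A y - b‖ ^ 2 + α * ‖y‖ ^ 2)
    (u₀ : H) (b_exact : K) (hexact : A u₀ = b_exact)
    (δ : ℝ) (hδ : 0 < δ) (hnoise : ‖b - b_exact‖ ≤ δ) :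
    ‖A ybar - A u₀‖ ^ 2 + α * ‖ybar - u₀‖ ^ 2 ≤ δ ^ 2 + α * ‖u₀‖ ^ 2 :=
  tikhonov_stability_estimate_general A b α hα ybar hmin u₀ b_exact hexact δ hnoise
end

section
/- If the regularization parameter is chosen as α = δ², then the minimizer of the Tikhonov functional with noisy data satisfies ‖u₀ − ȳ‖² ≤ 1 + ‖u₀‖². -/
/-!
A minimizer `ȳ` of the quadratic functional `J_α` satisfies the normal equation, so `J_α` is
exactly quadratic around it: `J_α y = J_α ȳ + ‖A (y - ȳ)‖² + α ‖y - ȳ‖²`. Taking `y = u₀` gives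
`α ‖u₀ - ȳ‖² ≤ J_α u₀ = ‖b_exact - b‖² + α ‖u₀‖² ≤ δ² + α ‖u₀‖²`, and `α = δ²` cancels.
-/

open scoped RealInnerProductSpace

section Tikhonov

variable {H K : Type*} [NormedAddCommGroup H] [InnerProductSpace ℝ H]
  [NormedAddCommGroup K] [InnerProductSpace ℝ K] (A : H →L[ℝ] K) (b : K) (α : ℝ)

def tikhonovFunctional (y : H) : ℝ :=
  ‖A y - b‖ ^ 2 + α * ‖y‖ ^ 2

lemma tikhonovFunctional_add (x w : H) :
    tikhonovFunctional A b α (x + w) = tikhonovFunctional A b α x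
      + 2 * (⟪A x - b, A w⟫ + α * ⟪x, w⟫) + (‖A w‖ ^ 2 + α * ‖w‖ ^ 2) := by
  have hres : A (x + w) - b = (A x - b) + A w := by rw [map_add]; abel
  simp only [tikhonovFunctional, hres, norm_add_sq_real]
  ring

variable {A b α} {x : H}

lemma tikhonov_normal_equation (hmin : ∀ y, tikhonovFunctional A b α x ≤ tikhonovFunctional A b α y)
    (w : H) : ⟪A x - b, A w⟫ + α * ⟪x, w⟫ = 0 := by
  set L := ⟪A x - b, A w⟫ + α * ⟪x, w⟫
  have hquad : ∀ t : ℝ, 0 ≤ (‖A w‖ ^ 2 + α * ‖w‖ ^ 2) * (t * t) + 2 * L * t + 0 := by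
    intro t
    have h := hmin (x + t • w)
    simp only [tikhonovFunctional_add, map_smul, inner_smul_right, norm_smul, mul_pow,
      Real.norm_eq_abs, sq_abs] at h
    linarith
  have hdiscrim := discrim_le_zero hquad
  rw [discrim] at hdiscrim
  nlinarith [sq_nonneg L]

lemma tikhonovFunctional_eq_of_forall_le
    (hmin : ∀ y, tikhonovFunctional A b α x ≤ tikhonovFunctional A b α y) (y : H) :
    tikhonovFunctional A b α y
      = tikhonovFunctional A b α x + ‖A (y - x)‖ ^ 2 + α * ‖y - x‖ ^ 2 := by
  have h := tikhonovFunctional_add A b α x (y - x)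
  rw [add_sub_cancel, tikhonov_normal_equation hmin] at h
  linarith

lemma mul_sq_norm_sub_le_tikhonovFunctional (hα : 0 ≤ α)
    (hmin : ∀ y, tikhonovFunctional A b α x ≤ tikhonovFunctional A b α y) (y : H) :
    α * ‖y - x‖ ^ 2 ≤ tikhonovFunctional A b α y := by
  have hJx : 0 ≤ tikhonovFunctional A b α x := by unfold tikhonovFunctional; positivity
  rw [tikhonovFunctional_eq_of_forall_le hmin y]
  nlinarith [sq_nonneg ‖A (y - x)‖]

end Tikhonov

/-- With the parameter choice `α = δ²`, the Tikhonov minimizer with noisy data satisfies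
`‖u₀ − ȳ‖² ≤ 1 + ‖u₀‖²`. -/
theorem tikhonov_error_bound_alpha_eq_delta_sq
    {H K : Type*} [NormedAddCommGroup H] [InnerProductSpace ℝ H]
    [NormedAddCommGroup K] [InnerProductSpace ℝ K]
    (A : H →L[ℝ] K) (b : K) (δ : ℝ) (hδ : 0 < δ) (α : ℝ) (hα : α = δ ^ 2)
    (ybar : H)
    (hmin : ∀ y : H, ‖A ybar - b‖ ^ 2 + α * ‖ybar‖ ^ 2 ≤ ‖A y - b‖ ^ 2 + α * ‖y‖ ^ 2)
    (u₀ : H) (b_exact : K) (hexact : A u₀ = b_exact)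
    (hnoise : ‖b - b_exact‖ ≤ δ) :
    ‖u₀ - ybar‖ ^ 2 ≤ 1 + ‖u₀‖ ^ 2 := by
  have hαpos : 0 < α := hα ▸ pow_pos hδ 2
  have hJu₀ : tikhonovFunctional A b α u₀ ≤ α * (1 + ‖u₀‖ ^ 2) := by
    have hres : ‖A u₀ - b‖ ^ 2 ≤ α := by
      rw [hexact, norm_sub_rev, hα]
      exact pow_le_pow_left₀ (norm_nonneg _) hnoise 2
    unfold tikhonovFunctional
    linarith
  exact le_of_mul_le_mul_left
    ((mul_sq_norm_sub_le_tikhonovFunctional hαpos.le hmin u₀).trans hJu₀) hαpos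
end

section
/- The image of the error of the Tikhonov minimizer under the forward operator satisfies ‖A ȳ − A u₀‖² ≤ 4δ² + 2α‖u₀‖². -/
/-!
Comparing the Tikhonov minimizer with the exact solution `u₀` bounds the residual:
`‖A ȳ - b‖² ≤ J_α(u₀) ≤ δ² + α‖u₀‖²`. The triangle inequality through `b`, together with
`(s + t)² ≤ 2 (s² + t²)`, then turns this and `‖b - A u₀‖ ≤ δ` into the claimed bound.
-/

theorem norm_sub_sq_le_two_mul {E : Type*} [SeminormedAddCommGroup E] (x y z : E) :
    ‖x - z‖ ^ 2 ≤ 2 * (‖x - y‖ ^ 2 + ‖y - z‖ ^ 2) :=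
  calc ‖x - z‖ ^ 2 ≤ (‖x - y‖ + ‖y - z‖) ^ 2 := by
        gcongr; exact norm_sub_le_norm_sub_add_norm_sub x y z
    _ ≤ 2 * (‖x - y‖ ^ 2 + ‖y - z‖ ^ 2) := add_sq_le

theorem sq_norm_residual_le_of_tikhonov_min {E F : Type*} [SeminormedAddCommGroup E]
    [SeminormedAddCommGroup F] {A : E → F} {b : F} {α : ℝ} (hα : 0 ≤ α) {ybar : E}
    (hmin : ∀ y : E, ‖A ybar - b‖ ^ 2 + α * ‖ybar‖ ^ 2 ≤ ‖A y - b‖ ^ 2 + α * ‖y‖ ^ 2) (u : E) :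
    ‖A ybar - b‖ ^ 2 ≤ ‖A u - b‖ ^ 2 + α * ‖u‖ ^ 2 :=
  (le_add_of_nonneg_right (by positivity)).trans (hmin u)

theorem tikhonov_forward_error_bound_general
    {H K : Type*} [NormedAddCommGroup H] [InnerProductSpace ℝ H]
    [NormedAddCommGroup K] [InnerProductSpace ℝ K]
    (A : H →L[ℝ] K) (b : K) (α : ℝ) (hα : 0 < α)
    (ybar : H)
    (hmin : ∀ y : H, ‖A ybar - b‖ ^ 2 + α * ‖ybar‖ ^ 2 ≤ ‖A y - b‖ ^ 2 + α * ‖y‖ ^ 2)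
    (u₀ : H) (b_exact : K) (hexact : A u₀ = b_exact)
    (δ : ℝ) (hnoise : ‖b - b_exact‖ ≤ δ) :
    ‖A ybar - A u₀‖ ^ 2 ≤ 4 * δ ^ 2 + 2 * α * ‖u₀‖ ^ 2 := by
  have hdata : ‖b - A u₀‖ ^ 2 ≤ δ ^ 2 := by
    rw [hexact]; exact pow_le_pow_left₀ (norm_nonneg _) hnoise 2
  have hresidual : ‖A ybar - b‖ ^ 2 ≤ δ ^ 2 + α * ‖u₀‖ ^ 2 := by
    have h := sq_norm_residual_le_of_tikhonov_min hα.le hmin u₀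
    rw [norm_sub_rev (A u₀)] at h
    linarith
  calc ‖A ybar - A u₀‖ ^ 2 ≤ 2 * (‖A ybar - b‖ ^ 2 + ‖b - A u₀‖ ^ 2) :=
        norm_sub_sq_le_two_mul _ b _
    _ ≤ 4 * δ ^ 2 + 2 * α * ‖u₀‖ ^ 2 := by linarith

/-- Bound on the image of the error of the Tikhonov minimizer under the forward operator:
`‖A ȳ − A u₀‖² ≤ 4δ² + 2α‖u₀‖²`. -/
theorem tikhonov_forward_error_bound
    {H K : Type*} [NormedAddCommGroup H] [InnerProductSpace ℝ H]
    [NormedAddCommGroup K] [InnerProductSpace ℝ K]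
    (A : H →L[ℝ] K) (b : K) (α : ℝ) (hα : 0 < α)
    (ybar : H)
    (hmin : ∀ y : H, ‖A ybar - b‖ ^ 2 + α * ‖ybar‖ ^ 2 ≤ ‖A y - b‖ ^ 2 + α * ‖y‖ ^ 2)
    (u₀ : H) (b_exact : K) (hexact : A u₀ = b_exact)
    (δ : ℝ) (hδ : 0 < δ) (hnoise : ‖b - b_exact‖ ≤ δ) :
    ‖A ybar - A u₀‖ ^ 2 ≤ 4 * δ ^ 2 + 2 * α * ‖u₀‖ ^ 2 :=
  tikhonov_forward_error_bound_general A b α hα ybar hmin u₀ b_exact hexact δ hnoise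
end
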